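/- Let q ≥ 1 be an integer and ε ∈ [0, 2/(5(2q−1))]. Define x* : {0,…,2q} → ℝ by x*(0) = 0, x*(h) = 2/5 + ε for every odd h ∈ {1,…,2q}, and x*(h) = −2/5 + ε for every even h ∈ {2,…,2q}. Then x* is feasible for (2q, −2/5 + ε), cost(x*) = 8(q+2)/25 + 2qε², and every trajectory y feasible for (2q, −2/5 + ε) with y ≠ x* satisfies cost(y) > cost(x*); that is, x* is the unique minimizer of cost over trajectories feasible for (2q, −2/5 + ε). -/
import Mathlib


/-- A trajectory `x : ℕ → ℝ` is feasible for `(p, z)` if `x 0 = 0`, `x p = z`,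
`x t ∈ [-1,1]` for all `t ≤ p`, and `|x (t+1) - x t| ≤ 4/5` for all `t < p`. -/
def Feasible (p : ℕ) (z : ℝ) (x : ℕ → ℝ) : Prop :=
  x 0 = 0 ∧ x p = z ∧ (∀ t ≤ p, x t ∈ Set.Icc (-1 : ℝ) 1) ∧
    ∀ t < p, |x (t + 1) - x t| ≤ 4 / 5

/-- `ξ t = 4/5` if `t` is odd and `-4/5` if `t` is even. -/
noncomputable def xiTgt (t : ℕ) : ℝ := if Odd t then 4 / 5 else -(4 / 5)

/-- The cost of a trajectory: `∑_{t=0}^{p} (x t - ξ t)^2`. -/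
noncomputable def cost (p : ℕ) (x : ℕ → ℝ) : ℝ :=
  ∑ t ∈ Finset.range (p + 1), (x t - xiTgt t) ^ 2


/-- The candidate optimal trajectory: `x* 0 = 0`, `x* h = 2/5 + ε` for odd `h`,
and `x* h = -2/5 + ε` for even `h ≥ 2`. -/
noncomputable def xstarF (ε : ℝ) (h : ℕ) : ℝ :=
  if h = 0 then 0 else if Odd h then 2 / 5 + ε else -(2 / 5) + ε

lemma abel_sum (c d : ℕ → ℝ) (N : ℕ) :
    ∑ t ∈ Finset.range N, c (t+1) * d (t+1)
      = (∑ t ∈ Finset.range N,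
          (∑ s ∈ Finset.range (t+1), c (s+1)) * (d (t+1) - d (t+2)))
        + (∑ s ∈ Finset.range N, c (s+1)) * d (N+1) := by
  induction N with
  | zero => simp
  | succ n ih =>
      rw [Finset.sum_range_succ, ih,
        Finset.sum_range_succ
          (f := fun t => (∑ s ∈ Finset.range (t+1), c (s+1)) * (d (t+1) - d (t+2))),
        Finset.sum_range_succ (f := fun s => c (s+1))]
      ring

lemma xstar_odd (ε : ℝ) {h : ℕ} (hh : Odd h) : xstarF ε h = 2/5 + ε := by
  have h0 : h ≠ 0 := by rintro rfl; simp [Nat.odd_iff] at hh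
  simp [xstarF, h0, hh]

lemma xstar_even (ε : ℝ) {h : ℕ} (h0 : h ≠ 0) (hh : ¬ Odd h) : xstarF ε h = -(2/5) + ε := by
  simp [xstarF, h0, hh]

lemma Spartial (ε : ℝ) (m : ℕ) :
    ∑ s ∈ Finset.range m, (xstarF ε (s+1) - xiTgt (s+1))
      = (m : ℝ) * ε - (if Odd m then 2/5 else 0) := by
  induction m with
  | zero => simp [Nat.odd_iff]
  | succ n ih =>
      rw [Finset.sum_range_succ, ih]
      rcases Nat.even_or_odd n with he | ho
      · have h1 : Odd (n+1) := Even.add_one he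
        have hn : ¬ Odd n := (Nat.not_odd_iff_even).mpr he
        rw [xstar_odd ε h1]
        simp only [xiTgt, if_pos h1, if_neg hn, if_pos h1]
        push_cast; ring
      · have h1 : ¬ Odd (n+1) := by simp [Nat.odd_add_one, ho]
        rw [xstar_even ε (Nat.succ_ne_zero n) h1]
        simp only [xiTgt, if_neg h1, if_pos ho]
        push_cast; ring

lemma cost_xstar (ε : ℝ) (q : ℕ) :
    cost (2*q) (xstarF ε) = 8 * ((q : ℝ) + 2) / 25 + 2 * (q : ℝ) * ε ^ 2 := by
  induction q with
  | zero => simp [cost, xstarF, xiTgt, Nat.odd_iff]; norm_num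
  | succ n ih =>
      have e1 : 2*(n+1)+1 = (2*n+1)+1+1 := by ring
      rw [cost, e1, Finset.sum_range_succ, Finset.sum_range_succ, ← cost]
      have ho : Odd (2*n+1) := ⟨n, by ring⟩
      have he : ¬ Odd ((2*n+1)+1) := by simp [Nat.odd_add_one, ho]
      rw [ih, xstar_odd ε ho, xstar_even ε (by omega) he]
      simp only [xiTgt, if_pos ho, if_neg he]
      push_cast; ring

theorem stmt_6 (q : ℕ) (hq : 1 ≤ q) (ε : ℝ)
    (hε : ε ∈ Set.Icc (0 : ℝ) (2 / (5 * (2 * (q : ℝ) - 1)))) :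
    Feasible (2 * q) (-(2 / 5) + ε) (xstarF ε) ∧
    cost (2 * q) (xstarF ε) = 8 * ((q : ℝ) + 2) / 25 + 2 * (q : ℝ) * ε ^ 2 ∧
    ∀ y, Feasible (2 * q) (-(2 / 5) + ε) y → (∃ t ≤ 2 * q, y t ≠ xstarF ε t) →
      cost (2 * q) (xstarF ε) < cost (2 * q) y := by
  obtain ⟨hε0, hεu⟩ := hε
  have hq1 : (1:ℝ) ≤ (q:ℝ) := by exact_mod_cast hq
  have hpos : (0:ℝ) < 5 * (2*(q:ℝ) - 1) := by nlinarith
  have hεmul : ε * (5 * (2*(q:ℝ) - 1)) ≤ 2 := by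
    rw [← le_div_iff₀ hpos]; exact hεu
  have hε25 : ε ≤ 2/5 := by nlinarith
  have hx2q : xstarF ε (2*q) = -(2/5) + ε :=
    xstar_even ε (by omega) (Nat.not_odd_iff_even.mpr (even_two_mul q))
  refine ⟨⟨by simp [xstarF], hx2q, ?_, ?_⟩, cost_xstar ε q, ?_⟩
  · -- bounds
    intro t _
    rw [Set.mem_Icc]
    rcases eq_or_ne t 0 with rfl | ht0
    · simp [xstarF]
    · rcases Nat.even_or_odd t with hte | hto
      · rw [xstar_even ε ht0 (Nat.not_odd_iff_even.mpr hte)]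
        constructor <;> linarith
      · rw [xstar_odd ε hto]
        constructor <;> linarith
  · -- steps
    intro t ht
    rcases eq_or_ne t 0 with rfl | ht0
    · rw [show (0:ℕ)+1 = 1 from rfl, xstar_odd ε (by decide)]
      simp [xstarF]
      rw [abs_le]; constructor <;> linarith
    · rcases Nat.even_or_odd t with hte | hto
      · have h1 : Odd (t+1) := Even.add_one hte
        rw [xstar_odd ε h1, xstar_even ε ht0 (Nat.not_odd_iff_even.mpr hte)]
        rw [show (2/5 + ε) - (-(2/5) + ε) = (4/5 : ℝ) from by ring]
        rw [abs_le]; constructor <;> norm_num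
      · have h1 : ¬ Odd (t+1) := by simp [Nat.odd_add_one, hto]
        rw [xstar_even ε (by omega) h1, xstar_odd ε hto]
        rw [show (-(2/5) + ε) - (2/5 + ε) = (-(4/5) : ℝ) from by ring]
        rw [abs_le]; constructor <;> norm_num
  · -- uniqueness / minimality
    intro y hy hne
    obtain ⟨hy0, hyN, _hybnd, hystep⟩ := hy
    obtain ⟨t0, ht0, hyne⟩ := hne
    obtain ⟨m, rfl⟩ : ∃ m, q = m+1 := ⟨q-1, by omega⟩
    have hεm : ε * (5*(2*(m:ℝ)+1)) ≤ 2 := by push_cast at hεmul ⊢; linarith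
    set d : ℕ → ℝ := fun t => y t - xstarF ε t with hd
    set c : ℕ → ℝ := fun t => xstarF ε t - xiTgt t with hc
    have hd0 : d 0 = 0 := by simp [hd, hy0, xstarF]
    have hdN : d (2*m+2) = 0 := by
      have : (2*m+2 : ℕ) = 2*(m+1) := by ring
      simp [hd, this, hyN, hx2q]
    have expand : cost (2*(m+1)) y - cost (2*(m+1)) (xstarF ε)
        = (∑ t ∈ Finset.range (2*(m+1)+1), d t ^ 2)
          + 2 * ∑ t ∈ Finset.range (2*(m+1)+1), c t * d t := by
      unfold cost
      rw [← Finset.sum_sub_distrib, Finset.mul_sum, ← Finset.sum_add_distrib]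
      apply Finset.sum_congr rfl
      intro t _
      simp only [hd, hc]; ring
    have hsq : 0 < ∑ t ∈ Finset.range (2*(m+1)+1), d t ^ 2 := by
      apply Finset.sum_pos' (fun i _ => sq_nonneg _)
      refine ⟨t0, Finset.mem_range.mpr (by omega), ?_⟩
      have hdne : d t0 ≠ 0 := by simp [hd]; exact sub_ne_zero.mpr hyne
      positivity
    have hlin : 0 ≤ ∑ t ∈ Finset.range (2*(m+1)+1), c t * d t := by
      have e1 : 2*(m+1)+1 = (2*m+2)+1 := by ring
      rw [e1, Finset.sum_range_succ' (f := fun t => c t * d t), hd0, mul_zero, add_zero,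
        show (2*m+2 : ℕ) = (2*m+1)+1 from rfl,
        Finset.sum_range_succ (f := fun i => c (i+1) * d (i+1)), hdN, mul_zero, add_zero,
        abel_sum c d (2*m+1), hdN, mul_zero, add_zero]
      apply Finset.sum_nonneg
      intro t htm
      rw [Finset.mem_range] at htm
      have hSval : ∑ s ∈ Finset.range (t+1), c (s+1)
          = ((t:ℝ)+1)*ε - (if Odd (t+1) then 2/5 else 0) := by
        simp only [hc]
        rw [Spartial ε (t+1)]
        push_cast; ring_nf
      rcases Nat.even_or_odd t with hte | hto
      · -- t even : t+1 odd, S ≤ 0, d (t+1) - d (t+2) ≤ 0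
        have h1 : Odd (t+1) := Even.add_one hte
        have h2 : ¬ Odd (t+2) := by simp [Nat.odd_add_one, h1]
        have hS : ∑ s ∈ Finset.range (t+1), c (s+1) ≤ 0 := by
          rw [hSval, if_pos h1]
          have htr : (t:ℝ) ≤ 2*(m:ℝ) := by exact_mod_cast Nat.lt_succ_iff.mp htm
          nlinarith [mul_le_mul_of_nonneg_right
            (show (t:ℝ)+1 ≤ 2*(m:ℝ)+1 from by linarith) hε0]
        have hstep := hystep (t+1) (by omega)
        rw [abs_le] at hstep
        have hdiff : d (t+1) - d (t+2) ≤ 0 := by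
          simp only [hd]
          rw [xstar_odd ε h1, xstar_even ε (by omega) h2]
          linarith [hstep.1]
        nlinarith [mul_nonneg (neg_nonneg.mpr hS) (neg_nonneg.mpr hdiff)]
      · -- t odd : t+1 even, S ≥ 0, d (t+1) - d (t+2) ≥ 0
        have h1 : ¬ Odd (t+1) := by simp [Nat.odd_add_one, hto]
        have h2 : Odd (t+2) := by
          rcases hto with ⟨k, hk⟩; exact ⟨k+1, by omega⟩
        have hS : 0 ≤ ∑ s ∈ Finset.range (t+1), c (s+1) := by
          rw [hSval, if_neg h1]
          have : (0:ℝ) ≤ (t:ℝ)+1 := by positivity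
          nlinarith
        have hstep := hystep (t+1) (by omega)
        rw [abs_le] at hstep
        have hdiff : 0 ≤ d (t+1) - d (t+2) := by
          simp only [hd]
          rw [xstar_even ε (by omega) h1, xstar_odd ε h2]
          linarith [hstep.2]
        exact mul_nonneg hS hdiff
    linarith [expand, hsq, hlin]
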